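/- arXiv:2503.08394 — 2 statements merged into one kernel-verified Lean document; each statement's English description precedes it below -/
import Mathlib

section
/- Let K be a symmetric positive semidefinite block matrix [[A, B], [Bᵀ, E]] with A n×n and E m×m, and let σ > 0. Define the conditional covariance S = E − Bᵀ(A + σ⁻²I)⁻¹B. Then det(I + σ⁻² E) ≥ det(I + σ⁻² S). -/
/-!
Put `c = σ⁻²` and `M = A + c • 1`, which is positive definite. Writing `E = S + W` with the
Schur complement `S = E - Bᵀ M⁻¹ B` and `W = Bᵀ M⁻¹ B`, both summands are positive semidefinite:
`S` because the block matrix stays positive semidefinite when `c • 1` is added to its top-left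
block, and `W` because `M⁻¹` is positive definite. So the claim is an instance of the monotonicity
`det X ≤ det (X + Y)` for `X` positive definite and `Y` positive semidefinite.
-/

open Matrix
open scoped ComplexOrder MatrixOrder

namespace Matrix

variable {m n : Type*}

theorem PosSemidef.toBlocks₁₁ {R : Type*} [Ring R] [PartialOrder R] [StarRing R]
    {M : Matrix (m ⊕ n) (m ⊕ n) R} (hM : M.PosSemidef) : M.toBlocks₁₁.PosSemidef :=
  hM.submatrix Sum.inl

theorem PosSemidef.schurComplement_add_posDef [Fintype m] [DecidableEq m] [Finite n]
    {K : Type*} [Field K] [PartialOrder K] [StarRing K] [StarOrderedRing K]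
    {A P : Matrix m m K} {B : Matrix m n K} {D : Matrix n n K}
    (hK : (fromBlocks A B Bᴴ D).PosSemidef) (hP : P.PosDef) :
    (D - Bᴴ * (A + P)⁻¹ * B).PosSemidef := by
  have hA : A.PosSemidef := by simpa using hK.toBlocks₁₁
  have hAP : (A + P).PosDef := PosDef.posSemidef_add hA hP
  have := hP.isUnit.invertible
  have := hAP.isUnit.invertible
  have hP0 : (fromBlocks P 0 0ᴴ (0 : Matrix n n K)).PosSemidef :=
    (hP.fromBlocks₁₁ 0 0).mpr (by simpa using PosSemidef.zero)
  refine (hAP.fromBlocks₁₁ B D).mp ?_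
  simpa [fromBlocks_add] using hK.add hP0

section RCLike

variable {𝕜 : Type*} [RCLike 𝕜] [Fintype n] [DecidableEq n]

theorem PosSemidef.one_le_det_one_add {Z : Matrix n n 𝕜} (hZ : Z.PosSemidef) :
    1 ≤ (1 + Z).det := by
  have hcfc : 1 + Z = cfc (fun x : ℝ => 1 + x) Z := by
    rw [cfc_add .., cfc_const_one .., cfc_id' ..]
  rw [hcfc, hZ.isHermitian.cfc_eq]
  simp only [IsHermitian.cfc, det_map, det_diagonal, Function.comp_apply, map_add, map_one]
  refine Finset.one_le_prod fun i _ => ?_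
  exact le_add_of_nonneg_right (RCLike.ofReal_nonneg.mpr (hZ.eigenvalues_nonneg i))

theorem PosDef.det_le_det_add {X Y : Matrix n n 𝕜} (hX : X.PosDef) (hY : Y.PosSemidef) :
    X.det ≤ (X + Y).det := by
  obtain ⟨C, rfl⟩ := CStarAlgebra.nonneg_iff_eq_star_mul_self.mp hY.nonneg
  have hfactor : X + star C * C = X * (1 + X⁻¹ * star C * C) := by
    rw [Matrix.mul_add, Matrix.mul_one, Matrix.mul_assoc,
      mul_nonsing_inv_cancel_left _ _ ((isUnit_iff_isUnit_det X).mp hX.isUnit)]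
  have hZ : (C * X⁻¹ * Cᴴ).PosSemidef := hX.inv.posSemidef.mul_mul_conjTranspose_same C
  rw [hfactor, det_mul, det_one_add_mul_comm (X⁻¹ * star C) C, ← Matrix.mul_assoc]
  exact le_mul_of_one_le_right hX.det_pos.le hZ.one_le_det_one_add

theorem det_one_add_smul_schurComplement_le [Fintype m] [DecidableEq m]
    {A : Matrix m m 𝕜} {B : Matrix m n 𝕜} {D : Matrix n n 𝕜}
    (hK : (fromBlocks A B Bᴴ D).PosSemidef) {c : ℝ} (hc : 0 < c) :
    (1 + c • (D - Bᴴ * (A + c • 1)⁻¹ * B)).det ≤ (1 + c • D).det := by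
  have hcI : (c • 1 : Matrix m m 𝕜).PosDef := PosDef.one.smul hc
  have hM : (A + c • 1).PosDef := PosDef.posSemidef_add (by simpa using hK.toBlocks₁₁) hcI
  have hS := hK.schurComplement_add_posDef hcI
  have hW : (Bᴴ * (A + c • 1)⁻¹ * B).PosSemidef := hM.inv.posSemidef.conjTranspose_mul_mul_same B
  calc (1 + c • (D - Bᴴ * (A + c • 1)⁻¹ * B)).det
      ≤ (1 + c • (D - Bᴴ * (A + c • 1)⁻¹ * B) + c • (Bᴴ * (A + c • 1)⁻¹ * B)).det :=
        (PosDef.one.add_posSemidef (hS.smul hc.le)).det_le_det_add (hW.smul hc.le)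
    _ = (1 + c • D).det := by rw [smul_sub, add_assoc, sub_add_cancel]

end RCLike

end Matrix

theorem det_cond_cov_le_det {n m : ℕ}
    (A : Matrix (Fin n) (Fin n) ℝ) (B : Matrix (Fin n) (Fin m) ℝ)
    (E : Matrix (Fin m) (Fin m) ℝ)
    (hK : (Matrix.fromBlocks A B Bᵀ E).PosSemidef) (σ : ℝ) (hσ : 0 < σ) :
    ((1 : Matrix (Fin m) (Fin m) ℝ) + (σ ^ 2)⁻¹ •
      (E - Bᵀ * (A + (σ ^ 2)⁻¹ • (1 : Matrix (Fin n) (Fin n) ℝ))⁻¹ * B)).det ≤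
    ((1 : Matrix (Fin m) (Fin m) ℝ) + (σ ^ 2)⁻¹ • E).det := by
  rw [← conjTranspose_eq_transpose_of_trivial] at hK ⊢
  exact det_one_add_smul_schurComplement_le hK (by positivity)
end

section
/- Let K be a symmetric positive semidefinite block matrix [[A, B], [Bᵀ, E]] with σ > 0, and let S = E − Bᵀ(A + σ⁻²I)⁻¹B. Then (1/2)·log(det(I + σ⁻²E)) ≥ (1/2)·log(det(I + σ⁻²S)). -/
/-!
Shifting the top-left block by `σ⁻² • 1` keeps the block matrix positive semidefinite and makes
that block invertible, so the Schur complement `S` is positive semidefinite. Then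
`1 + σ⁻² • E = (1 + σ⁻² • S) + σ⁻² • Bᵀ (A + σ⁻² • 1)⁻¹ B` is a positive definite matrix plus a
positive semidefinite one, and the determinant is monotone there: writing `M = Qᴴ Q`,
`det (M + P) = det M * det (1 + Q⁻ᴴ P Q⁻¹)`, and `1 + (psd)` has all eigenvalues `≥ 1`.
-/

open Matrix

namespace Matrix

section

variable {ι κ K : Type*} [Fintype ι] [Fintype κ] [DecidableEq κ]
  [Field K] [PartialOrder K] [StarRing K] [StarOrderedRing K]

theorem PosSemidef.schur_complement_add_posDef {A P : Matrix κ κ K} {B : Matrix κ ι K}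
    {D : Matrix ι ι K} (hK : (fromBlocks A B Bᴴ D).PosSemidef) (hP : P.PosDef) :
    (D - Bᴴ * (A + P)⁻¹ * B).PosSemidef := by
  have hA : A.PosSemidef := hK.submatrix Sum.inl
  have hAP : (A + P).PosDef := hP.posSemidef_add hA
  have hP0 : (fromBlocks P 0 (0 : Matrix κ ι K)ᴴ (0 : Matrix ι ι K)).PosSemidef := by
    have := hP.isUnit.invertible
    exact (PosDef.fromBlocks₁₁ 0 0 hP).mpr (by simpa using PosSemidef.zero)
  have := hAP.isUnit.invertible
  refine (PosDef.fromBlocks₁₁ B D hAP).mp ?_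
  simpa [fromBlocks_add] using hK.add hP0

end

section

variable {ι : Type*} [Fintype ι] [DecidableEq ι]

theorem PosSemidef.one_le_det_one_add_s4 {R : Matrix ι ι ℝ} (hR : R.PosSemidef) :
    1 ≤ (1 + R).det := by
  set U := hR.isHermitian.eigenvectorUnitary
  have hdiag : 1 + R =
      Unitary.conjStarAlgAut ℝ _ U (diagonal fun i ↦ 1 + hR.isHermitian.eigenvalues i) := by
    conv_lhs =>
      rw [hR.isHermitian.spectral_theorem, ← map_one (Unitary.conjStarAlgAut ℝ _ U), ← map_add]
    rw [← diagonal_one, diagonal_add]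
    rfl
  rw [hdiag, Unitary.conjStarAlgAut_apply, det_mul_comm, ← mul_assoc, Unitary.coe_star_mul_self,
    one_mul, det_diagonal]
  exact Finset.one_le_prod fun i _ ↦ le_add_of_nonneg_right (hR.eigenvalues_nonneg i)

open scoped MatrixOrder in
theorem PosDef.det_le_det_add_s4 {M P : Matrix ι ι ℝ} (hM : M.PosDef) (hP : P.PosSemidef) :
    M.det ≤ (M + P).det := by
  obtain ⟨Q, rfl⟩ := CStarAlgebra.nonneg_iff_eq_star_mul_self.mp hM.posSemidef.nonneg
  have hQ : IsUnit Q.det := by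
    refine isUnit_of_mul_isUnit_right (x := (star Q).det) ?_
    rw [← det_mul]
    exact hM.det_pos.ne'.isUnit
  have hfactor : star Q * Q + P = star Q * (1 + (Q⁻¹)ᴴ * P * Q⁻¹) * Q := by
    rw [mul_add, add_mul, mul_one, ← mul_assoc, ← mul_assoc, star_eq_conjTranspose,
      ← conjTranspose_mul, nonsing_inv_mul _ hQ, conjTranspose_one, one_mul, mul_assoc,
      nonsing_inv_mul _ hQ, mul_one]
  have hpos : 0 < (star Q).det * Q.det := det_mul (star Q) Q ▸ hM.det_pos
  have hone := (hP.conjTranspose_mul_mul_same Q⁻¹).one_le_det_one_add_s4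
  rw [hfactor, det_mul, det_mul, det_mul, mul_right_comm]
  exact le_mul_of_one_le_right hpos.le hone

end

end Matrix

theorem log_det_cond_cov_le {n m : ℕ}
    (A : Matrix (Fin n) (Fin n) ℝ) (B : Matrix (Fin n) (Fin m) ℝ)
    (E : Matrix (Fin m) (Fin m) ℝ)
    (hK : (Matrix.fromBlocks A B Bᵀ E).PosSemidef) (σ : ℝ) (hσ : 0 < σ) :
    (1 / 2 : ℝ) * Real.log ((1 : Matrix (Fin m) (Fin m) ℝ) + (σ ^ 2)⁻¹ •
      (E - Bᵀ * (A + (σ ^ 2)⁻¹ • (1 : Matrix (Fin n) (Fin n) ℝ))⁻¹ * B)).det ≤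
    (1 / 2 : ℝ) * Real.log ((1 : Matrix (Fin m) (Fin m) ℝ) + (σ ^ 2)⁻¹ • E).det := by
  set c : ℝ := (σ ^ 2)⁻¹
  have hc : 0 < c := by positivity
  have hcI : (c • (1 : Matrix (Fin n) (Fin n) ℝ)).PosDef := PosDef.one.smul hc
  set G := Bᵀ * (A + c • (1 : Matrix (Fin n) (Fin n) ℝ))⁻¹ * B
  -- over `ℝ`, `Bᴴ` unfolds to `Bᵀ`, so the `Bᴴ`-forms below are accepted for `G`
  rw [← conjTranspose_eq_transpose_of_trivial] at hK
  have hS : (E - G).PosSemidef := hK.schur_complement_add_posDef hcI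
  have hG : G.PosSemidef :=
    (hcI.posSemidef_add (hK.submatrix Sum.inl)).inv.posSemidef.conjTranspose_mul_mul_same B
  have hM := PosDef.one.add_posSemidef (hS.smul hc.le)
  have hdet := hM.det_le_det_add_s4 (hG.smul hc.le)
  rw [add_assoc, ← smul_add, sub_add_cancel] at hdet
  gcongr
  exact hM.det_pos
end
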